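/- arXiv:1312.2298 — 2 statements merged into one kernel-verified Lean document; each statement's English description precedes it below -/
import Mathlib

section
/- Let μ be a Borel probability measure on ℝ^N and suppose there exist constants c, C > 0, d ≥ 0, and ε₀ > 0 such that c·ε^d ≤ μ(B(x,ε)) ≤ C·ε^d for every x in the support of μ and every 0 < ε < ε₀. Then the correlation dimension D_C(μ) = lim_{ε→0⁺} log C(μ,ε)/log ε exists and equals d. -/
/-!
Up to null sets every point lies in the support, so integrating the two-sided ball bounds gives
`C(μ,ε) ≍ ε^d`. Then `log C(μ,ε) = d log ε + O(1)`, and dividing by `log ε → -∞` gives the limit.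
-/

open MeasureTheory Filter Metric Topology ENNReal

/-- The support of a measure on a metric space: points all of whose balls have positive mass. -/
def measSupport {X : Type*} [MetricSpace X] [MeasurableSpace X] (μ : Measure X) : Set X :=
  {x | ∀ ε : ℝ, 0 < ε → 0 < μ (Metric.ball x ε)}

/-- The correlation integral `C(μ,ε) = (μ ⊗ μ){(x,y) : ‖x - y‖ < ε}`. -/
noncomputable def corrIntegral {N : ℕ} (μ : Measure (EuclideanSpace ℝ (Fin N))) (ε : ℝ) :
    ℝ≥0∞ :=
  (μ.prod μ) {q : EuclideanSpace ℝ (Fin N) × EuclideanSpace ℝ (Fin N) | dist q.1 q.2 < ε}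

open Asymptotics

theorem measSupport_eq_support {X : Type*} [MetricSpace X] [MeasurableSpace X]
    (μ : Measure X) : measSupport μ = μ.support := by
  ext x
  exact nhds_basis_ball.mem_measureSupport.symm

theorem ae_mem_measSupport {X : Type*} [MetricSpace X] [HereditarilyLindelofSpace X]
    [MeasurableSpace X] (μ : Measure X) : ∀ᵐ x ∂μ, x ∈ measSupport μ := by
  rw [measSupport_eq_support]
  exact Measure.support_mem_ae

section CorrelationIntegral

variable {N : ℕ} (μ : Measure (EuclideanSpace ℝ (Fin N)))

theorem corrIntegral_eq_lintegral [SFinite μ] (ε : ℝ) :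
    corrIntegral μ ε = ∫⁻ x, μ (ball x ε) ∂μ := by
  rw [corrIntegral, Measure.prod_apply (isOpen_lt continuous_dist continuous_const).measurableSet]
  refine lintegral_congr fun x => congrArg μ ?_
  ext y
  simp [dist_comm]

variable [IsProbabilityMeasure μ] {ε : ℝ}

theorem le_corrIntegral_of_ae_le {a : ℝ≥0∞} (h : ∀ᵐ x ∂μ, a ≤ μ (ball x ε)) :
    a ≤ corrIntegral μ ε := by
  simpa [corrIntegral_eq_lintegral] using lintegral_mono_ae h

theorem corrIntegral_le_of_ae_le {b : ℝ≥0∞} (h : ∀ᵐ x ∂μ, μ (ball x ε) ≤ b) :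
    corrIntegral μ ε ≤ b := by
  simpa [corrIntegral_eq_lintegral] using lintegral_mono_ae h

end CorrelationIntegral

theorem isTheta_of_le_of_le {α : Type*} {l : Filter α} {f g : α → ℝ} {c C : ℝ} (hc : 0 < c)
    (hf : ∀ᶠ x in l, c * g x ≤ f x ∧ f x ≤ C * g x) (hg : ∀ᶠ x in l, 0 ≤ g x) :
    f =Θ[l] g := by
  have hfg : ∀ᶠ x in l, ‖f x‖ = f x ∧ ‖g x‖ = g x := by
    filter_upwards [hf, hg] with x ⟨hlo, _⟩ hgx
    exact ⟨Real.norm_of_nonneg ((mul_nonneg hc.le hgx).trans hlo), Real.norm_of_nonneg hgx⟩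
  refine ⟨.of_bound C ?_, .of_bound c⁻¹ ?_⟩
  · filter_upwards [hf, hfg] with x ⟨_, hup⟩ ⟨hfx, hgx⟩
    rwa [hfx, hgx]
  · filter_upwards [hf, hfg] with x ⟨hlo, _⟩ ⟨hfx, hgx⟩
    rw [hfx, hgx, inv_mul_eq_div, le_div_iff₀ hc, mul_comm]
    exact hlo

theorem tendsto_div_log_nhdsGT_zero_of_le_of_le {g : ℝ → ℝ} {a b d : ℝ}
    (hg : ∀ᶠ ε in 𝓝[>] 0, a + d * Real.log ε ≤ g ε ∧ g ε ≤ b + d * Real.log ε) :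
    Tendsto (fun ε => g ε / Real.log ε) (𝓝[>] 0) (𝓝 d) := by
  have hlim : ∀ r : ℝ, Tendsto (fun ε => r / Real.log ε + d) (𝓝[>] 0) (𝓝 d) := fun r => by
    simpa using (Real.tendsto_log_nhdsGT_zero.const_div_atBot r).add_const d
  have hlog : ∀ᶠ ε in 𝓝[>] (0 : ℝ), Real.log ε < 0 := by
    filter_upwards [Ioo_mem_nhdsGT one_pos] with ε ⟨h0, h1⟩ using Real.log_neg h0 h1
  have hdiv : ∀ r ε, Real.log ε < 0 → r / Real.log ε + d = (r + d * Real.log ε) / Real.log ε :=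
    fun r ε hε => by rw [add_div, mul_div_cancel_right₀ _ hε.ne]
  refine tendsto_of_tendsto_of_tendsto_of_le_of_le' (hlim b) (hlim a) ?_ ?_
  · filter_upwards [hg, hlog] with ε ⟨_, hup⟩ hε
    rw [hdiv b ε hε]
    exact div_le_div_of_nonpos_of_le hε.le hup
  · filter_upwards [hg, hlog] with ε ⟨hlo, _⟩ hε
    rw [hdiv a ε hε]
    exact div_le_div_of_nonpos_of_le hε.le hlo

theorem tendsto_log_div_log_of_isTheta_rpow {f : ℝ → ℝ} {d : ℝ}
    (h : f =Θ[𝓝[>] 0] fun ε => ε ^ d) :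
    Tendsto (fun ε => Real.log (f ε) / Real.log ε) (𝓝[>] 0) (𝓝 d) := by
  obtain ⟨C, hC, hfC⟩ := h.isBigO.exists_pos
  obtain ⟨c, hc, hcf⟩ := h.isBigO_symm.exists_pos
  refine tendsto_div_log_nhdsGT_zero_of_le_of_le (a := -Real.log c) (b := Real.log C) ?_
  filter_upwards [hfC.bound, hcf.bound, self_mem_nhdsWithin] with ε hup hlo (hε : 0 < ε)
  have hpow : 0 < ε ^ d := Real.rpow_pos_of_pos hε d
  simp only [Real.norm_eq_abs, abs_of_pos hpow] at hup hlo
  have hf : 0 < |f ε| := pos_of_mul_pos_right (hpow.trans_le hlo) hc.le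
  rw [← Real.log_abs (f ε)]
  constructor
  · have := Real.log_le_log hpow hlo
    rw [Real.log_mul hc.ne' hf.ne', Real.log_rpow hε] at this
    linarith
  · have := Real.log_le_log hf hup
    rwa [Real.log_mul hC.ne' hpow.ne', Real.log_rpow hε] at this

theorem correlationDim_of_uniform_scaling_general {N : ℕ}
    (μ : Measure (EuclideanSpace ℝ (Fin N))) [IsProbabilityMeasure μ]
    (c C d ε₀ : ℝ) (hc : 0 < c) (hC : 0 < C) (hε₀ : 0 < ε₀)
    (hball : ∀ x ∈ measSupport μ, ∀ ε : ℝ, 0 < ε → ε < ε₀ →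
      ENNReal.ofReal (c * ε ^ d) ≤ μ (Metric.ball x ε) ∧
      μ (Metric.ball x ε) ≤ ENNReal.ofReal (C * ε ^ d)) :
    Tendsto (fun ε : ℝ => Real.log (corrIntegral μ ε).toReal / Real.log ε)
      (𝓝[>] 0) (𝓝 d) := by
  have hbounds : ∀ ε, 0 < ε → ε < ε₀ →
      c * ε ^ d ≤ (corrIntegral μ ε).toReal ∧ (corrIntegral μ ε).toReal ≤ C * ε ^ d := by
    intro ε hε hεε₀
    have hball_ae := (ae_mem_measSupport μ).mono fun x hx => hball x hx ε hε hεε₀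
    have hlo := le_corrIntegral_of_ae_le μ (hball_ae.mono fun _ => And.left)
    have hup := corrIntegral_le_of_ae_le μ (hball_ae.mono fun _ => And.right)
    exact ⟨(ENNReal.ofReal_le_iff_le_toReal (ne_top_of_le_ne_top ENNReal.ofReal_ne_top hup)).1 hlo,
      ENNReal.toReal_le_of_le_ofReal (by positivity) hup⟩
  refine tendsto_log_div_log_of_isTheta_rpow (isTheta_of_le_of_le (C := C) hc ?_ ?_)
  · filter_upwards [Ioo_mem_nhdsGT hε₀] with ε ⟨hε, hεε₀⟩ using hbounds ε hε hεε₀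
  · filter_upwards [self_mem_nhdsWithin] with ε (hε : 0 < ε) using Real.rpow_nonneg hε.le d

/-- If `c·ε^d ≤ μ(B(x,ε)) ≤ C·ε^d` for all `x` in the support of `μ` and all small `ε`, then the
correlation dimension `lim_{ε→0⁺} log C(μ,ε) / log ε` exists and equals `d`. -/
theorem correlationDim_of_uniform_scaling {N : ℕ}
    (μ : Measure (EuclideanSpace ℝ (Fin N))) [IsProbabilityMeasure μ]
    (c C d ε₀ : ℝ) (hc : 0 < c) (hC : 0 < C) (hd : 0 ≤ d) (hε₀ : 0 < ε₀)
    (hball : ∀ x ∈ measSupport μ, ∀ ε : ℝ, 0 < ε → ε < ε₀ →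
      ENNReal.ofReal (c * ε ^ d) ≤ μ (Metric.ball x ε) ∧
      μ (Metric.ball x ε) ≤ ENNReal.ofReal (C * ε ^ d)) :
    Tendsto (fun ε : ℝ => Real.log (corrIntegral μ ε).toReal / Real.log ε)
      (𝓝[>] 0) (𝓝 d) :=
  correlationDim_of_uniform_scaling_general μ c C d ε₀ hc hC hε₀ hball
end

section
/- Let μ be a Borel probability measure on ℝ^N, let α ≥ 0, and set D_α := {x ∈ ℝ^N : D̲_μ(x) ≤ α}, where D̲_μ(x) is the lower pointwise dimension of μ at x. Then the Hausdorff dimension distribution of μ satisfies μ_H([0,α]) = μ(D_α), i.e., sup{ μ(E) : E ⊆ ℝ^N Borel with dim_H(E) ≤ α } = μ(D_α). -/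
open MeasureTheory Filter Metric Topology ENNReal

/-- The lower pointwise dimension of `μ` at `x`, valued in `EReal` so that points whose small
balls have measure zero get dimension `+∞`:
`liminf_{ε → 0⁺} log μ(B(x,ε)) / log ε` (with `log 0 = ⊥` in `EReal`). -/
noncomputable def lowerPointwiseDimE {X : Type*} [MetricSpace X] [MeasurableSpace X]
    (μ : Measure X) (x : X) : EReal :=
  liminf (fun ε : ℝ => ENNReal.log (μ (Metric.ball x ε)) * (((Real.log ε)⁻¹ : ℝ) : EReal))
    (𝓝[>] 0)

/-!
If `D̲_μ > q` on a set `F`, then `F` is a countable union of pieces on which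
`μ(B(x,ε)) ≤ ε^q` below a uniform scale, and the mass distribution principle gives
`μ ≤ μH[q]` on each piece; so a set of Hausdorff dimension `≤ α` lies in `D_α` up to a
`μ`-null set. Conversely, for `q > α` every point of `D_α` has balls with `μ(B(x,ε)) ≥ ε^q`
at arbitrarily small scales, and Besicovitch covers by such balls give
`μH[q](D_α) ≤ 2^q μ(D_α) < ∞`, whence `dim_H D_α ≤ α`; a measurable hull of `D_α` of the same
dimension realises the supremum.
-/

theorem ENNReal.log_mul_inv_log_lt_iff {m : ℝ≥0∞} {ε s : ℝ} (hε₀ : 0 < ε) (hε₁ : ε < 1) :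
    ENNReal.log m * (((Real.log ε)⁻¹ : ℝ) : EReal) < s ↔ ENNReal.ofReal ε ^ s < m := by
  have hlog : Real.log ε < 0 := Real.log_neg hε₀ hε₁
  have hdiv : StrictAnti fun a : EReal => a / (Real.log ε : EReal) :=
    EReal.strictAnti_div_right_of_neg (EReal.coe_neg'.2 hlog) (EReal.coe_ne_bot _)
  have hs : (s : EReal) = ((s * Real.log ε : ℝ) : EReal) / (Real.log ε : EReal) := by
    rw [← EReal.coe_div, mul_div_cancel_right₀ _ hlog.ne]
  rw [EReal.coe_inv, ← div_eq_mul_inv, hs, hdiv.lt_iff_gt, ← ENNReal.log_lt_log_iff,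
    ENNReal.log_rpow, ENNReal.log_ofReal_of_pos hε₀, EReal.coe_mul]

theorem exists_measurableSet_superset_dimH_eq {X : Type*} [EMetricSpace X] [MeasurableSpace X]
    [BorelSpace X] (S : Set X) :
    ∃ E, S ⊆ E ∧ MeasurableSet E ∧ dimH E = dimH S := by
  let hull (q : {q : ℚ // dimH S < (q : ℝ).toNNReal}) : Set X :=
    toMeasurable μH[((q : ℚ) : ℝ).toNNReal] S
  have hSE : S ⊆ ⋂ q, hull q := Set.subset_iInter fun q => subset_toMeasurable _ _
  have hdim (q : ℚ) (hq : dimH S < (q : ℝ).toNNReal) : dimH (⋂ q, hull q) ≤ (q : ℝ).toNNReal := by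
    refine dimH_le_of_hausdorffMeasure_ne_top (ne_top_of_le_ne_top ENNReal.zero_ne_top ?_)
    calc μH[_] (⋂ q, hull q) ≤ μH[_] (hull ⟨q, hq⟩) := measure_mono (Set.iInter_subset _ _)
      _ = 0 := by rw [measure_toMeasurable, hausdorffMeasure_of_dimH_lt hq]
  refine ⟨⋂ q, hull q, hSE, MeasurableSet.iInter fun q => measurableSet_toMeasurable _ _,
    le_antisymm (le_of_forall_gt fun b hb => ?_) (dimH_mono hSE)⟩
  obtain ⟨q, -, hSq, hqb⟩ := ENNReal.lt_iff_exists_rat_btwn.1 hb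
  exact (hdim q hSq).trans_lt hqb

theorem Metric.ediam_closedBall_le_two_mul {X : Type*} [PseudoMetricSpace X] (x : X) {r : ℝ}
    (hr : 0 ≤ r) : ediam (closedBall x r) ≤ 2 * ENNReal.ofReal r := by
  rw [← Metric.closedEBall_ofReal hr]
  exact ediam_closedEBall_le

section

variable {X : Type*} [MetricSpace X] [MeasurableSpace X]

theorem frequently_rpow_le_measure_ball_of_lowerPointwiseDimE_lt {μ : Measure X} {x : X} {s : ℝ}
    (h : lowerPointwiseDimE μ x < s) :
    ∃ᶠ ε in 𝓝[>] 0, ENNReal.ofReal ε ^ s ≤ μ (ball x ε) := by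
  refine ((frequently_lt_of_liminf_lt (by isBoundedDefault) h).and_eventually
    (Ioo_mem_nhdsGT one_pos)).mono fun ε ⟨hε, hε₀, hε₁⟩ => ?_
  exact ((ENNReal.log_mul_inv_log_lt_iff hε₀ hε₁).1 hε).le

theorem eventually_measure_ball_le_rpow_of_lt_lowerPointwiseDimE {μ : Measure X} {x : X}
    {s : ℝ} (h : s < lowerPointwiseDimE μ x) :
    ∀ᶠ ε in 𝓝[>] 0, μ (ball x ε) ≤ ENNReal.ofReal ε ^ s := by
  filter_upwards [eventually_lt_of_lt_liminf h (by isBoundedDefault), Ioo_mem_nhdsGT one_pos]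
    with ε hε ⟨hε₀, hε₁⟩
  exact not_lt.1 fun h' => hε.not_gt ((ENNReal.log_mul_inv_log_lt_iff hε₀ hε₁).2 h')

theorem measure_le_hausdorffMeasure_of_measure_ball_le [BorelSpace X] (μ : Measure X)
    {s r : ℝ} (hr : 0 < r) {F : Set X}
    (hF : ∀ x ∈ F, ∀ ε ∈ Set.Ioo 0 r, μ (ball x ε) ≤ ENNReal.ofReal ε ^ s) :
    μ F ≤ μH[s] F := by
  -- A small `t` meeting `F` at `x` lies in `B(x, ε)` for every `ε > diam t`; let `ε ↓ diam t`.
  have hsmall : ∀ t : Set X, ediam t ≤ ENNReal.ofReal (r / 2) → μ (t ∩ F) ≤ ediam t ^ s := by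
    intro t ht
    rcases (t ∩ F).eq_empty_or_nonempty with he | ⟨x, hxt, hxF⟩
    · simp [he]
    have hfin : ediam t ≠ ⊤ := ne_top_of_le_ne_top ofReal_ne_top ht
    have hdr : (ediam t).toReal < r :=
      (ENNReal.toReal_le_of_le_ofReal (half_pos hr).le ht).trans_lt (half_lt_self hr)
    have hball : ∀ ε ∈ Set.Ioo (ediam t).toReal r, μ (t ∩ F) ≤ ENNReal.ofReal ε ^ s := by
      refine fun ε hε => (measure_mono fun y hy => mem_ball.2 ?_).trans
        (hF x hxF ε ⟨ENNReal.toReal_nonneg.trans_lt hε.1, hε.2⟩)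
      rw [dist_edist]
      exact (ENNReal.toReal_mono hfin (edist_le_ediam_of_mem hy.1 hxt)).trans_lt hε.1
    have hlim : Tendsto (fun ε => ENNReal.ofReal ε ^ s) (𝓝[>] (ediam t).toReal)
        (𝓝 (ediam t ^ s)) := by
      have := ((ENNReal.continuous_rpow_const (y := s)).comp ENNReal.continuous_ofReal).tendsto
        (ediam t).toReal
      rw [Function.comp_apply, ENNReal.ofReal_toReal hfin] at this
      exact this.mono_left nhdsWithin_le_nhds
    exact ge_of_tendsto hlim (eventually_of_mem (Ioo_mem_nhdsGT hdr) hball)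
  -- `F` need not be measurable, hence the restriction of the outer measure.
  have hle := OuterMeasure.le_mkMetric (fun d => d ^ s) (OuterMeasure.restrict F μ.toOuterMeasure)
    _ (ENNReal.ofReal_pos.2 (half_pos hr)) fun t ht => by
      rw [OuterMeasure.restrict_apply]; exact hsmall t ht
  calc μ F = OuterMeasure.restrict F μ.toOuterMeasure F := by
        rw [OuterMeasure.restrict_apply, Set.inter_self]; rfl
    _ ≤ μH[s] F := by
        rw [Measure.hausdorffMeasure, ← Measure.coe_toOuterMeasure,
          Measure.mkMetric_toOuterMeasure]
        exact hle F

theorem measure_eq_zero_of_dimH_lt_of_lt_lowerPointwiseDimE [BorelSpace X] {μ : Measure X}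
    {s : ℝ} {F : Set X} (hdim : dimH F < ENNReal.ofReal s)
    (hF : ∀ x ∈ F, (s : EReal) < lowerPointwiseDimE μ x) :
    μ F = 0 := by
  have hs : 0 < s := ENNReal.ofReal_pos.1 (zero_le.trans_lt hdim)
  have hH : μH[s] F = 0 := by
    simpa only [Real.coe_toNNReal _ hs.le] using hausdorffMeasure_of_dimH_lt (d := s.toNNReal) hdim
  have hcover : F ⊆ ⋃ n : ℕ, {x ∈ F | ∀ ε ∈ Set.Ioo 0 (1 / (n + 1 : ℝ)),
      μ (ball x ε) ≤ ENNReal.ofReal ε ^ s} := by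
    intro x hx
    obtain ⟨a, ha, hsub⟩ := mem_nhdsGT_iff_exists_Ioo_subset.1
      (eventually_measure_ball_le_rpow_of_lt_lowerPointwiseDimE (hF x hx))
    obtain ⟨n, hn⟩ := exists_nat_one_div_lt (Set.mem_Ioi.1 ha)
    exact Set.mem_iUnion.2 ⟨n, hx, fun ε hε => hsub ⟨hε.1, hε.2.trans hn⟩⟩
  refine measure_mono_null hcover (measure_iUnion_null fun n => le_antisymm ?_ zero_le)
  calc μ _ ≤ μH[s] _ :=
        measure_le_hausdorffMeasure_of_measure_ball_le μ Nat.one_div_pos_of_nat fun x hx => hx.2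
    _ ≤ μH[s] F := measure_mono (Set.sep_subset _ _)
    _ = 0 := hH

theorem measure_diff_setOf_lowerPointwiseDimE_le_eq_zero [BorelSpace X] {μ : Measure X}
    {α : ℝ} (hα : 0 ≤ α) {E : Set X} (hE : dimH E ≤ ENNReal.ofReal α) :
    μ (E \ {x | lowerPointwiseDimE μ x ≤ α}) = 0 := by
  have hcover : E \ {x | lowerPointwiseDimE μ x ≤ α} ⊆
      ⋃ q : {q : ℚ // α < q}, {x ∈ E | ((q : ℝ) : EReal) < lowerPointwiseDimE μ x} := by
    rintro x ⟨hxE, hx⟩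
    obtain ⟨q, hαq, hqx⟩ := EReal.exists_rat_btwn_of_lt (not_le.1 hx)
    exact Set.mem_iUnion.2 ⟨⟨q, EReal.coe_lt_coe_iff.1 hαq⟩, hxE, hqx⟩
  refine measure_mono_null hcover (measure_iUnion_null fun q =>
    measure_eq_zero_of_dimH_lt_of_lt_lowerPointwiseDimE ?_ fun x hx => hx.2)
  calc dimH _ ≤ dimH E := dimH_mono (Set.sep_subset _ _)
    _ ≤ ENNReal.ofReal α := hE
    _ < ENNReal.ofReal q := (ENNReal.ofReal_lt_ofReal_iff (hα.trans_lt q.2)).2 q.2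

theorem hausdorffMeasure_le_two_rpow_mul_of_frequently_rpow_le_measure_closedBall
    [SecondCountableTopology X] [BorelSpace X] [HasBesicovitchCovering X] (μ : Measure X)
    [SFinite μ] [μ.OuterRegular] {s : ℝ} (hs : 0 ≤ s)
    {A : Set X} (hA : ∀ x ∈ A, ∃ᶠ ρ in 𝓝[>] 0, ENNReal.ofReal ρ ^ s ≤ μ (closedBall x ρ)) :
    μH[s] A ≤ 2 ^ s * μ A := by
  set δ : ℕ → ℝ := fun n => 1 / (n + 1)
  have hδ : Tendsto (fun n => ENNReal.ofReal (δ n)) atTop (𝓝 0) :=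
    ENNReal.ofReal_zero ▸ ENNReal.tendsto_ofReal tendsto_one_div_add_atTop_nhds_zero_nat
  have hcover : ∀ n : ℕ, ∃ (t : Set X) (r : X → ℝ), t.Countable ∧ t ⊆ A ∧
      (∀ x ∈ t, r x ∈ Set.Ioo 0 (δ n) ∩ {ρ | ENNReal.ofReal ρ ^ s ≤ μ (closedBall x ρ)}) ∧
      A ⊆ (⋃ x ∈ t, closedBall x (r x)) ∧
      ∑' x : t, μ (closedBall x (r x)) ≤ μ A + ENNReal.ofReal (δ n) := fun n =>
    Besicovitch.exists_closedBall_covering_tsum_measure_le μ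
      (ENNReal.ofReal_pos.2 Nat.one_div_pos_of_nat).ne' _ A fun x hx ρ hρ =>
        ((hA x hx).and_eventually (Ioo_mem_nhdsGT (lt_min hρ Nat.one_div_pos_of_nat))).exists.imp
          fun r ⟨hr, hr₀, hr₁⟩ =>
            ⟨⟨⟨hr₀, hr₁.trans_le (min_le_right _ _)⟩, hr⟩, hr₀, hr₁.trans_le (min_le_left _ _)⟩
  choose t r ht_count _ hr hA_sub hsum using hcover
  have (n : ℕ) : Countable (t n) := (ht_count n).to_subtype
  have hdiam (n : ℕ) (x : t n) :
      ediam (closedBall (x : X) (r n x)) ≤ 2 * ENNReal.ofReal (r n x) :=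
    Metric.ediam_closedBall_le_two_mul _ (hr n x x.2).1.1.le
  have hterm (n : ℕ) (x : t n) :
      ediam (closedBall (x : X) (r n x)) ^ s ≤ 2 ^ s * μ (closedBall (x : X) (r n x)) :=
    calc _ ≤ (2 * ENNReal.ofReal (r n x)) ^ s := ENNReal.rpow_le_rpow (hdiam n x) hs
      _ = 2 ^ s * ENNReal.ofReal (r n x) ^ s := ENNReal.mul_rpow_of_nonneg _ _ hs
      _ ≤ _ := by gcongr; exact (hr n x x.2).2
  calc μH[s] A ≤ liminf (fun n => ∑' x : t n, ediam (closedBall (x : X) (r n x)) ^ s) atTop :=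
        Measure.hausdorffMeasure_le_liminf_tsum s A (fun n => 2 * ENNReal.ofReal (δ n))
          (by simpa using ENNReal.Tendsto.const_mul hδ (Or.inr ofNat_ne_top))
          (fun n (x : t n) => closedBall (x : X) (r n x))
          (Eventually.of_forall fun n x =>
            (hdiam n x).trans (by gcongr; exact (hr n x x.2).1.2.le))
          (Eventually.of_forall fun n => by simpa using hA_sub n)
    _ ≤ liminf (fun n => 2 ^ s * (μ A + ENNReal.ofReal (δ n))) atTop :=
        liminf_le_liminf (Eventually.of_forall fun n => (ENNReal.tsum_le_tsum (hterm n)).trans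
          (ENNReal.tsum_mul_left.trans_le (mul_le_mul_right (hsum n) _)))
    _ = 2 ^ s * μ A := by
        refine Tendsto.liminf_eq ?_
        simpa using ENNReal.Tendsto.const_mul (tendsto_const_nhds.add hδ)
          (Or.inr (ENNReal.rpow_ne_top_of_nonneg hs ofNat_ne_top))

theorem dimH_setOf_lowerPointwiseDimE_le [SecondCountableTopology X] [BorelSpace X]
    [HasBesicovitchCovering X] (μ : Measure X)
    [IsFiniteMeasure μ] (α : ℝ) :
    dimH {x | lowerPointwiseDimE μ x ≤ α} ≤ ENNReal.ofReal α := by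
  refine dimH_le fun d hd => le_of_not_gt fun hαd => ?_
  rw [← ENNReal.ofReal_coe_nnreal, ENNReal.ofReal_lt_ofReal_iff'] at hαd
  have hH := hausdorffMeasure_le_two_rpow_mul_of_frequently_rpow_le_measure_closedBall μ d.2
    fun x (hx : lowerPointwiseDimE μ x ≤ α) =>
      (frequently_rpow_le_measure_ball_of_lowerPointwiseDimE_lt
        (hx.trans_lt (EReal.coe_lt_coe_iff.2 hαd.1))).mono fun ρ hρ =>
          hρ.trans (measure_mono ball_subset_closedBall)
  exact (hH.trans_lt (ENNReal.mul_lt_top (ENNReal.rpow_lt_top_of_nonneg d.2 ofNat_ne_top)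
    (measure_lt_top μ _))).ne hd

end

/-- Cutler's theorem, second half: the Hausdorff dimension distribution of `μ` satisfies
`μ_H([0,α]) = μ(D_α)` where `D_α = {x : D̲_μ(x) ≤ α}`; the left side is the supremum of `μ(E)`
over Borel sets `E` of Hausdorff dimension at most `α`. -/
theorem hausdorffDimDistribution_eq_measure_of_lowerPointwiseDim_le {N : ℕ}
    (μ : Measure (EuclideanSpace ℝ (Fin N))) [IsProbabilityMeasure μ]
    (α : ℝ) (hα : 0 ≤ α) :
    (⨆ (E : Set (EuclideanSpace ℝ (Fin N))) (_ : MeasurableSet E)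
        (_ : dimH E ≤ ENNReal.ofReal α), μ E)
      = μ {x : EuclideanSpace ℝ (Fin N) | lowerPointwiseDimE μ x ≤ (α : EReal)} := by
  refine le_antisymm (iSup₂_le fun E _ => iSup_le fun hE => measure_mono_ae <|
    ae_le_set.2 (measure_diff_setOf_lowerPointwiseDimE_le_eq_zero hα hE)) ?_
  obtain ⟨E, hDE, hE, hdim⟩ := exists_measurableSet_superset_dimH_eq
    {x : EuclideanSpace ℝ (Fin N) | lowerPointwiseDimE μ x ≤ (α : EReal)}
  exact (measure_mono hDE).trans <|
    le_iSup₂_of_le E hE <| le_iSup_of_le (hdim ▸ dimH_setOf_lowerPointwiseDimE_le μ α) le_rfl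
end
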